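/- Let D = (N, A) be a DAG and S ⊆ N a dissociation set of Mo(D). Define Q as the set of vertices of N \ S having a descendant in S, and A_Q = A ∩ ((S∪Q)×(S∪Q)). Then ⟨Q, A_Q⟩ is an ancestor tuple for S with |Q| ≤ 2|S|, and A \ A_Q is a suitable arc set for ⟨Q, A_Q⟩. -/

import Mathlib

open scoped Classical

variable {V : Type*}

/-- The arc relation of an arc set. -/
def arcRel (A : Set (V × V)) : V → V → Prop := fun u v => (u, v) ∈ A

/-- `(N, A)` is a directed acyclic graph: no directed cycles. -/
def IsDAG (A : Set (V × V)) : Prop := ∀ v : V, ¬ Relation.TransGen (arcRel A) v v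

/-- Parent set of `v` under arc set `A`. -/
def parents (A : Set (V × V)) (v : V) : Set V := {u | (u, v) ∈ A}

/-- `w` is a descendant of `v`: there is a (nonempty) directed path from `v` to `w`. -/
def Descends (A : Set (V × V)) (v w : V) : Prop := Relation.TransGen (arcRel A) v w

/-- The moralized graph of `(N, A)`: edges between adjacent vertices and
between vertices with a common child. -/
def Mo (A : Set (V × V)) : SimpleGraph V where
  Adj u v := u ≠ v ∧ ((u, v) ∈ A ∨ (v, u) ∈ A ∨ ∃ w, (u, w) ∈ A ∧ (v, w) ∈ A)
  symm := by
    constructor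
    intro u v h
    obtain ⟨hne, h⟩ := h
    refine ⟨hne.symm, ?_⟩
    rcases h with h | h | ⟨w, h1, h2⟩
    · exact Or.inr (Or.inl h)
    · exact Or.inl h
    · exact Or.inr (Or.inr ⟨w, h2, h1⟩)
  loopless := ⟨fun v h => h.1 rfl⟩

/-- `S` is a dissociation set of `G`: `G − S` has maximum degree at most one. -/
def IsDissoc (G : SimpleGraph V) (S : Set V) : Prop :=
  ∀ v ∉ S, {w | w ∉ S ∧ G.Adj v w}.ncard ≤ 1

/-- The set `Q₀` of vertices of `Q` having degree zero outside `S`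
in the moralized graph of `(S ∪ Q, A_Q)`. -/
def Q0set (S Q : Set V) (AQ : Set (V × V)) : Set V :=
  {v ∈ Q | ∀ u ∉ S, ¬ (Mo AQ).Adj v u}

/-- The remaining vertices `R = N \ (S ∪ Q)`. -/
def Rset (S Q : Set V) : Set V := (S ∪ Q)ᶜ

/-- `⟨Q, A_Q⟩` is an ancestor tuple for `S`. -/
def IsAncestorTuple (S Q : Set V) (AQ : Set (V × V)) : Prop :=
  Disjoint Q S ∧ AQ ⊆ (S ∪ Q) ×ˢ (S ∪ Q) ∧ IsDAG AQ ∧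
  (∀ v ∈ Q, ∃ w ∈ S, Descends AQ v w) ∧
  (∀ v ∈ Q, {u | u ∉ S ∧ (Mo AQ).Adj v u}.ncard ≤ 1)

/-- `A_R` is a suitable arc set for the ancestor tuple `⟨Q, A_Q⟩`. -/
def IsSuitable (S Q : Set V) (AQ AR : Set (V × V)) : Prop :=
  AR ⊆ (S ∪ Q0set S Q AQ ∪ Rset S Q) ×ˢ Rset S Q ∧
  (∀ v : V, (v, v) ∉ AR) ∧
  ∀ w ∈ Q0set S Q AQ ∪ Rset S Q,
    {p ∈ AR ∩ ((Rset S Q ∪ Q0set S Q AQ) ×ˢ Rset S Q) | p.1 = w ∨ p.2 = w}.ncard ≤ 1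
/-
Outside `S` the moralized graph is a matching. The non-`S` parents of a vertex `s ∈ S` are
pairwise moral neighbours, and a path from `Q` into `S` can have at most two vertices outside `S`
before it first meets `S` (a third would give its successor two distinct neighbours outside `S`).
Hence all vertices of `Q` reaching `s` first lie in the closed neighbourhood of one parent of `s`
in `Mo A − S`, a set of at most two vertices, so `|Q| ≤ 2|S|`. An arc of `A` leaving `S ∪ Q`
would make its tail an ancestor of `S`, so `A \ A_Q` only points into `R`, and the matching
property bounds its degree at every vertex outside `S`.
-/

theorem Relation.TransGen.restrict_reaching {α : Type*} {r : α → α → Prop} {a b : α}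
    (h : Relation.TransGen r a b) :
    Relation.TransGen (fun x y => r x y ∧ Relation.ReflTransGen r y b) a b := by
  induction h using Relation.TransGen.head_induction_on with
  | single hab => exact .single ⟨hab, .refl⟩
  | head hac hcb ih => exact .head ⟨hac, hcb.to_reflTransGen⟩ ih

section Moralization

variable {A : Set (V × V)} {S : Set V}

lemma Mo_mono {A' : Set (V × V)} (h : A' ⊆ A) : Mo A' ≤ Mo A := by
  rintro u v ⟨hne, huv | hvu | ⟨w, huw, hvw⟩⟩
  exacts [⟨hne, .inl (h huv)⟩, ⟨hne, .inr (.inl (h hvu))⟩,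
    ⟨hne, .inr (.inr ⟨w, h huw, h hvw⟩)⟩]

lemma mem_of_Mo_adj {X : Set V} (hA : A ⊆ X ×ˢ X) {u v : V} (h : (Mo A).Adj u v) : v ∈ X := by
  obtain ⟨-, huv | hvu | ⟨w, -, hvw⟩⟩ := h
  exacts [(hA huv).2, (hA hvu).1, (hA hvw).1]

lemma IsDAG.ne_of_mem (hA : IsDAG A) {u v : V} (h : (u, v) ∈ A) : u ≠ v := by
  rintro rfl
  exact hA u (.single h)

lemma IsDAG.swap_notMem_of_mem (hA : IsDAG A) {u v : V} (h : (u, v) ∈ A) : (v, u) ∉ A :=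
  fun h' => hA u (.head h (.single h'))

lemma IsDAG.Mo_adj_of_mem (hA : IsDAG A) {u v : V} (h : (u, v) ∈ A) : (Mo A).Adj u v :=
  ⟨hA.ne_of_mem h, .inl h⟩

lemma IsDissoc.eq_of_adj [Finite V] {G : SimpleGraph V} (hS : IsDissoc G S) {v w w' : V}
    (hv : v ∉ S) (hw : w ∉ S) (hw' : w' ∉ S) (h : G.Adj v w) (h' : G.Adj v w') : w = w' :=
  ((Set.ncard_le_one (Set.toFinite _)).1 (hS v hv)) w ⟨hw, h⟩ w' ⟨hw', h'⟩

lemma IsDissoc.ncard_insert_le_two {G : SimpleGraph V} (hS : IsDissoc G S) {v : V}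
    (hv : v ∉ S) : (insert v {w | w ∉ S ∧ G.Adj v w}).ncard ≤ 2 :=
  (Set.ncard_insert_le _ _).trans (by have := hS v hv; omega)

lemma IsDissoc.arc_eq_of_incident [Finite V] (hA : IsDAG A) (hS : IsDissoc (Mo A) S)
    {w a b c d : V} (hab : (a, b) ∈ A) (hcd : (c, d) ∈ A) (ha : a ∉ S) (hb : b ∉ S)
    (hc : c ∉ S) (hd : d ∉ S) (h : a = w ∨ b = w) (h' : c = w ∨ d = w) :
    (a, b) = (c, d) := by
  have adj := fun {u v} (h : (u, v) ∈ A) => hA.Mo_adj_of_mem h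
  rcases h with rfl | rfl <;> rcases h' with rfl | rfl
  · rw [hS.eq_of_adj ha hb hd (adj hab) (adj hcd)]
  · obtain rfl := hS.eq_of_adj ha hb hc (adj hab) (adj hcd).symm
    exact absurd hcd (hA.swap_notMem_of_mem hab)
  · obtain rfl := hS.eq_of_adj hb ha hd (adj hab).symm (adj hcd)
    exact absurd hcd (hA.swap_notMem_of_mem hab)
  · rw [hS.eq_of_adj hb ha hc (adj hab).symm (adj hcd).symm]

lemma IsDissoc.ncard_incident_arcs_le_one [Finite V] (hA : IsDAG A) (hS : IsDissoc (Mo A) S)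
    (w : V) : {p ∈ A | p.1 ∉ S ∧ p.2 ∉ S ∧ (p.1 = w ∨ p.2 = w)}.ncard ≤ 1 :=
  (Set.ncard_le_one (Set.toFinite _)).2
    fun ⟨_, _⟩ ⟨hp, hp₁, hp₂, hpw⟩ ⟨_, _⟩ ⟨hq, hq₁, hq₂, hqw⟩ =>
      hS.arc_eq_of_incident hA hp hq hp₁ hp₂ hq₁ hq₂ hpw hqw

end Moralization

section AncestorTuple

/-- The set `Q`; `restrictArcs A (S ∪ Q)` is `A_Q`. -/
def outsideAncestors (A : Set (V × V)) (S : Set V) : Set V :=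
  {v | v ∉ S ∧ ∃ w ∈ S, Descends A v w}

def restrictArcs (A : Set (V × V)) (X : Set V) : Set (V × V) := A ∩ X ×ˢ X

def nearAncestors (A : Set (V × V)) (S : Set V) (s : V) : Set V :=
  {v | v ∉ S ∧ ∃ p ∉ S, (p, s) ∈ A ∧ (v = p ∨ (v, p) ∈ A)}

variable {A : Set (V × V)} {S : Set V}

lemma disjoint_outsideAncestors : Disjoint (outsideAncestors A S) S :=
  Set.disjoint_left.2 fun _ hv => hv.1

lemma mem_union_outsideAncestors_of_mem {u v : V} (huv : (u, v) ∈ A)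
    (hv : v ∈ S ∪ outsideAncestors A S) : u ∈ S ∪ outsideAncestors A S := by
  by_cases hu : u ∈ S
  · exact .inl hu
  rcases hv with hv | ⟨-, w, hw, hvw⟩
  exacts [.inr ⟨hu, v, hv, .single huv⟩, .inr ⟨hu, w, hw, hvw.head huv⟩]

lemma descends_restrictArcs {v w : V} (hw : w ∈ S) (h : Descends A v w) :
    Descends (restrictArcs A (S ∪ outsideAncestors A S)) v w := by
  refine Relation.TransGen.mono (fun x y ⟨hxy, hyw⟩ => ⟨hxy, ?_⟩) _ _ h.restrict_reaching
  have hy : y ∈ S ∪ outsideAncestors A S := by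
    by_cases hyS : y ∈ S
    · exact .inl hyS
    rcases Relation.reflTransGen_iff_eq_or_transGen.1 hyw with rfl | hyw
    exacts [absurd hw hyS, .inr ⟨hyS, w, hw, hyw⟩]
  exact ⟨mem_union_outsideAncestors_of_mem hxy hy, hy⟩

lemma isAncestorTuple_outsideAncestors [Finite V] (hA : IsDAG A) (hS : IsDissoc (Mo A) S) :
    IsAncestorTuple S (outsideAncestors A S) (restrictArcs A (S ∪ outsideAncestors A S)) := by
  refine ⟨disjoint_outsideAncestors, Set.inter_subset_right,
    fun v hv => hA v (Relation.TransGen.mono (fun _ _ h => h.1) _ _ hv), ?_, fun v hv => ?_⟩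
  · rintro v ⟨-, w, hw, hvw⟩
    exact ⟨w, hw, descends_restrictArcs hw hvw⟩
  · refine (Set.ncard_le_ncard ?_ (Set.toFinite _)).trans (hS v hv.1)
    exact fun u ⟨hu, huv⟩ => ⟨hu, Mo_mono Set.inter_subset_left huv⟩

lemma IsDissoc.mem_insert_of_mem_nearAncestors [Finite V] (hA : IsDAG A)
    (hS : IsDissoc (Mo A) S) {s p₀ v : V} (hp₀ : p₀ ∉ S) (hp₀s : (p₀, s) ∈ A)
    (hv : v ∈ nearAncestors A S s) : v ∈ insert p₀ {w | w ∉ S ∧ (Mo A).Adj p₀ w} := by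
  obtain ⟨hvS, p, hp, hps, hvp⟩ := hv
  by_cases hpp₀ : p = p₀
  · subst hpp₀
    rcases hvp with rfl | hvp
    exacts [.inl rfl, .inr ⟨hvS, (hA.Mo_adj_of_mem hvp).symm⟩]
  have hadj : (Mo A).Adj p p₀ := ⟨hpp₀, .inr (.inr ⟨s, hps, hp₀s⟩)⟩
  rcases hvp with rfl | hvp
  · exact .inr ⟨hvS, hadj.symm⟩
  · exact .inl (hS.eq_of_adj hp hvS hp₀ (hA.Mo_adj_of_mem hvp).symm hadj)

lemma IsDissoc.ncard_nearAncestors_le [Finite V] (hA : IsDAG A) (hS : IsDissoc (Mo A) S)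
    (s : V) : (nearAncestors A S s).ncard ≤ 2 := by
  rcases (nearAncestors A S s).eq_empty_or_nonempty with h | ⟨-, -, p₀, hp₀, hp₀s, -⟩
  · simp [h]
  exact (Set.ncard_le_ncard (fun _ hv => hS.mem_insert_of_mem_nearAncestors hA hp₀ hp₀s hv)
    (Set.toFinite _)).trans (hS.ncard_insert_le_two hp₀)

lemma IsDissoc.exists_mem_nearAncestors [Finite V] (hA : IsDAG A) (hS : IsDissoc (Mo A) S)
    {v w : V} (hw : w ∈ S) (hvw : Descends A v w) (hv : v ∉ S) :
    ∃ s ∈ S, v ∈ nearAncestors A S s := by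
  revert hv
  induction hvw using Relation.TransGen.head_induction_on with
  | single hvw => exact fun hv => ⟨w, hw, hv, _, hv, hvw, .inl rfl⟩
  | @head v c hvc _ ih =>
    intro hv
    by_cases hc : c ∈ S
    · exact ⟨c, hc, hv, v, hv, hvc, .inl rfl⟩
    obtain ⟨s, hs, -, p, hp, hps, rfl | hcp⟩ := ih hc
    · exact ⟨s, hs, hv, c, hc, hps, .inr hvc⟩
    -- `c` would have the two neighbours `v` and `p` outside `S`, so `v = p` and `v → c → v`
    obtain rfl := hS.eq_of_adj hc hv hp (hA.Mo_adj_of_mem hvc).symm (hA.Mo_adj_of_mem hcp)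
    exact absurd hcp (hA.swap_notMem_of_mem hvc)

lemma IsDissoc.ncard_outsideAncestors_le [Finite V] (hA : IsDAG A) (hS : IsDissoc (Mo A) S) :
    (outsideAncestors A S).ncard ≤ 2 * S.ncard := by
  have hsub : outsideAncestors A S ⊆ ⋃ s ∈ S.toFinite.toFinset, nearAncestors A S s := by
    rintro v ⟨hv, w, hw, hvw⟩
    obtain ⟨s, hs, hvs⟩ := hS.exists_mem_nearAncestors hA hw hvw hv
    exact Set.mem_biUnion (S.toFinite.mem_toFinset.2 hs) hvs
  calc (outsideAncestors A S).ncard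
      ≤ (⋃ s ∈ S.toFinite.toFinset, nearAncestors A S s).ncard :=
        Set.ncard_le_ncard hsub (Set.toFinite _)
    _ ≤ ∑ s ∈ S.toFinite.toFinset, (nearAncestors A S s).ncard :=
        Finset.set_ncard_biUnion_le _ _
    _ ≤ ∑ _s ∈ S.toFinite.toFinset, 2 :=
        Finset.sum_le_sum fun s _ => hS.ncard_nearAncestors_le hA s
    _ = 2 * S.ncard := by
        rw [Finset.sum_const, smul_eq_mul, Set.ncard_eq_toFinset_card S, mul_comm]

end AncestorTuple

section Suitable

variable {A : Set (V × V)} {S : Set V}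

lemma notMem_of_mem_Rset_union_Q0set {Q : Set V} {AQ : Set (V × V)} (hQ : Disjoint Q S) {v : V}
    (hv : v ∈ Rset S Q ∪ Q0set S Q AQ) : v ∉ S := by
  rcases hv with hv | hv
  exacts [fun h => hv (.inl h), Set.disjoint_left.1 hQ hv.1]

lemma isSuitable_diff_restrictArcs [Finite V] (hA : IsDAG A) (hS : IsDissoc (Mo A) S) :
    IsSuitable S (outsideAncestors A S) (restrictArcs A (S ∪ outsideAncestors A S))
      (A \ restrictArcs A (S ∪ outsideAncestors A S)) := by
  refine ⟨fun ⟨u, v⟩ ⟨huv, hnot⟩ => ?_, fun v h => hA.ne_of_mem h.1 rfl, fun w _ => ?_⟩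
  · have hv : v ∉ S ∪ outsideAncestors A S := fun hv =>
      hnot ⟨huv, mem_union_outsideAncestors_of_mem huv hv, hv⟩
    refine ⟨?_, hv⟩
    by_cases hu : u ∈ S ∪ outsideAncestors A S
    · rcases hu with hu | hu
      · exact .inl (.inl hu)
      refine .inl (.inr ⟨hu, fun x hx hux => hv ?_⟩)
      -- the only neighbour of `u` outside `S` in `Mo A` is `v`, which lies outside `S ∪ Q`
      have hx' := mem_of_Mo_adj Set.inter_subset_right hux
      rwa [hS.eq_of_adj hu.1 hx (fun h => hv (.inl h)) (Mo_mono Set.inter_subset_left hux)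
        (hA.Mo_adj_of_mem huv)] at hx'
    · exact .inr hu
  · refine (Set.ncard_le_ncard ?_ (Set.toFinite _)).trans (hS.ncard_incident_arcs_le_one hA w)
    rintro p ⟨⟨⟨hp, -⟩, hp₁, hp₂⟩, hpw⟩
    exact ⟨hp, notMem_of_mem_Rset_union_Q0set disjoint_outsideAncestors hp₁,
      fun h => hp₂ (.inl h), hpw⟩

end Suitable

/-- Every DAG whose moralized graph has dissociation set `S` decomposes into an
ancestor tuple for `S` (with `|Q| ≤ 2|S|`) and a suitable arc set. -/
theorem stmt_7 [Fintype V] (A : Set (V × V)) (S : Set V)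
    (hdag : IsDAG A) (hdis : IsDissoc (Mo A) S) :
    IsAncestorTuple S {v | v ∉ S ∧ ∃ w ∈ S, Descends A v w}
        (A ∩ ((S ∪ {v | v ∉ S ∧ ∃ w ∈ S, Descends A v w}) ×ˢ
              (S ∪ {v | v ∉ S ∧ ∃ w ∈ S, Descends A v w}))) ∧
    {v | v ∉ S ∧ ∃ w ∈ S, Descends A v w}.ncard ≤ 2 * S.ncard ∧
    IsSuitable S {v | v ∉ S ∧ ∃ w ∈ S, Descends A v w}
        (A ∩ ((S ∪ {v | v ∉ S ∧ ∃ w ∈ S, Descends A v w}) ×ˢ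
              (S ∪ {v | v ∉ S ∧ ∃ w ∈ S, Descends A v w})))
        (A \ (A ∩ ((S ∪ {v | v ∉ S ∧ ∃ w ∈ S, Descends A v w}) ×ˢ
              (S ∪ {v | v ∉ S ∧ ∃ w ∈ S, Descends A v w})))) :=
  ⟨isAncestorTuple_outsideAncestors hdag hdis, hdis.ncard_outsideAncestors_le hdag,
    isSuitable_diff_restrictArcs hdag hdis⟩
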